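/- arXiv:1109.0623 — 3 statements merged into one kernel-verified Lean document; each statement's English description precedes it below -/
import Mathlib

section
/- Let V be a real inner product space, F an endomorphism satisfying g(FX,Y) + μ g(X,FY) = 0 (μ = ±1), W = D ⊕ D⊥ a subspace of V with F(D) ⊆ D, F(D⊥) ⊆ W⊥, and let D̃ be the orthogonal complement of F(D⊥) in W⊥. Assume F²(D⊥) ⊆ W. Then F(D̃) ⊆ D̃, i.e. D̃ is F-invariant. -/
open RealInnerProductSpace

/-- If `W = D ⊕ D⊥` orthogonally, `F(D) ⊆ D`, `F(D⊥) ⊆ W⊥`, `F²(D⊥) ⊆ W`, and `D̃` is the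
orthogonal complement of `F(D⊥)` in `W⊥`, then `D̃` is `F`-invariant. -/
theorem Dtilde_F_invariant
    {V : Type*} [NormedAddCommGroup V] [InnerProductSpace ℝ V] [FiniteDimensional ℝ V]
    (F : V →ₗ[ℝ] V) (μ : ℝ) (hμ : μ = 1 ∨ μ = -1)
    (h : ∀ X Y : V, ⟪F X, Y⟫ + μ * ⟪X, F Y⟫ = 0)
    (D Dp W Dt : Submodule ℝ V)
    (hW : W = D ⊔ Dp)
    (horth : ∀ x ∈ D, ∀ y ∈ Dp, ⟪x, y⟫ = 0)
    (hFD : ∀ x ∈ D, F x ∈ D)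
    (hFDp : ∀ x ∈ Dp, F x ∈ Wᗮ)
    (hFFDp : ∀ x ∈ Dp, F (F x) ∈ W)
    (hDt : Dt = Wᗮ ⊓ (Submodule.map F Dp)ᗮ) :
    ∀ v ∈ Dt, F v ∈ Dt := by
  subst hDt
  intro v hv
  obtain ⟨hvW, hvF⟩ := Submodule.mem_inf.mp hv
  rw [Submodule.mem_orthogonal] at hvW hvF
  have key : ∀ Y : V, ⟪F v, Y⟫ = -μ * ⟪v, F Y⟫ := by
    intro Y
    have := h v Y
    linarith
  refine Submodule.mem_inf.mpr ⟨?_, ?_⟩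
  · rw [Submodule.mem_orthogonal]
    intro u hu
    rw [real_inner_comm, key]
    rw [hW] at hu
    obtain ⟨d, hd, p, hp, rfl⟩ := Submodule.mem_sup.mp hu
    rw [map_add, inner_add_right]
    have h1 : ⟪v, F d⟫ = 0 := by
      rw [real_inner_comm]
      exact hvW (F d) (by rw [hW]; exact Submodule.mem_sup_left (hFD d hd))
    have h2 : ⟪v, F p⟫ = 0 := by
      rw [real_inner_comm]
      exact hvF (F p) ⟨p, hp, rfl⟩
    rw [h1, h2]; ring
  · rw [Submodule.mem_orthogonal]
    rintro u ⟨x, hx, rfl⟩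
    rw [real_inner_comm, key]
    have : ⟪v, F (F x)⟫ = 0 := by
      rw [real_inner_comm]; exact hvW _ (hFFDp x hx)
    rw [this]; ring
end

section
/- Let (M, g) be a Riemannian manifold, F a nondegenerate parallel (1,1)-tensor field with g(FX,Y) + μ g(X,FY) = 0 (μ = ±1), and N a semi-invariant submanifold with TN = D ⊕ D⊥, F(D) ⊆ D, F(D⊥) ⊆ T⊥N. Then D is involutive if and only if for all X, Y ∈ Γ(D) and Z ∈ Γ(D⊥): g(h(X, FY) - h(Y, FX), FZ) = 0, where h is the second fundamental form. -/
/-- Theorem 4.6: `D` is involutive iff `g(h(X,FY) - h(Y,FX), FZ) = 0` for all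
`X, Y ∈ Γ(D)` and `Z ∈ Γ(D⊥)`. -/
theorem invariant_distribution_involutive_iff
    {Γ : Type*} [LieRing Γ] [Module ℝ Γ]
    (g : Γ →ₗ[ℝ] Γ →ₗ[ℝ] ℝ) (hgsymm : ∀ X Y, g X Y = g Y X)
    (hgnondeg : ∀ X, (∀ Y, g X Y = 0) → X = 0)
    (nabla : Γ →ₗ[ℝ] Γ →ₗ[ℝ] Γ)
    (htorsionfree : ∀ X Y, nabla X Y - nabla Y X = ⁅X, Y⁆)
    (F : Γ →ₗ[ℝ] Γ) (hFinj : Function.Injective F)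
    (hparallel : ∀ X Y, nabla X (F Y) = F (nabla X Y))
    (μ : ℝ) (hμ : μ = 1 ∨ μ = -1)
    (hskew : ∀ X Y, g (F X) Y + μ * g X (F Y) = 0)
    (TN TpN D Dp : Submodule ℝ Γ)
    (hsplit : TN ⊔ TpN = ⊤) (horthN : ∀ x ∈ TN, ∀ y ∈ TpN, g x y = 0)
    (hDsum : D ⊔ Dp = TN) (horthD : ∀ x ∈ D, ∀ y ∈ Dp, g x y = 0)
    (hFD : ∀ x ∈ D, F x ∈ D) (hFDp : ∀ x ∈ Dp, F x ∈ TpN)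
    (indN h : Γ → Γ → Γ)
    (hGauss : ∀ X ∈ TN, ∀ Y ∈ TN,
      nabla X Y = indN X Y + h X Y ∧ indN X Y ∈ TN ∧ h X Y ∈ TpN)
    (hhsymm : ∀ X ∈ TN, ∀ Y ∈ TN, h X Y = h Y X) :
    (∀ X ∈ D, ∀ Y ∈ D, ⁅X, Y⁆ ∈ D) ↔
      (∀ X ∈ D, ∀ Y ∈ D, ∀ Z ∈ Dp, g (h X (F Y) - h Y (F X)) (F Z) = 0) := by
  classical
  have hDTN : D ≤ TN := by rw [← hDsum]; exact le_sup_left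
  have hDpTN : Dp ≤ TN := by rw [← hDsum]; exact le_sup_right
  have gadd : ∀ u v w : Γ, g (u + v) w = g u w + g v w := by
    intro u v w; simp [map_add]
  have gsub : ∀ u v w : Γ, g (u - v) w = g u w - g v w := by
    intro u v w; simp [map_sub]
  have horth1 : ∀ x ∈ TN, ∀ y ∈ TpN, g x y = 0 := horthN
  have horth2 : ∀ x ∈ TpN, ∀ y ∈ TN, g x y = 0 := by
    intro x hx y hy; rw [hgsymm]; exact horthN y hy x hx
  have horthD2 : ∀ x ∈ Dp, ∀ y ∈ D, g x y = 0 := by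
    intro x hx y hy; rw [hgsymm]; exact horthD y hy x hx
  have hperp : ∀ v : Γ, (∀ x ∈ D, g v x = 0) → (∀ x ∈ Dp, g v x = 0) →
      (∀ x ∈ TpN, g v x = 0) → v = 0 := by
    intro v h1 h2 h3
    apply hgnondeg
    intro y
    have hy : y ∈ TN ⊔ TpN := by rw [hsplit]; exact Submodule.mem_top
    obtain ⟨t, ht, p, hp, rfl⟩ := Submodule.mem_sup.mp hy
    have ht' : t ∈ D ⊔ Dp := by rw [hDsum]; exact ht
    obtain ⟨d, hd, z, hz, rfl⟩ := Submodule.mem_sup.mp ht'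
    simp [map_add, h1 d hd, h2 z hz, h3 p hp]
  have hbrTN : ∀ U ∈ TN, ∀ V ∈ TN, ⁅U, V⁆ ∈ TN := by
    intro U hU V hV
    have e1 := (hGauss U hU V hV).1
    have e2 := (hGauss V hV U hU).1
    have key : ⁅U, V⁆ = indN U V - indN V U := by
      rw [← htorsionfree, e1, e2, hhsymm U hU V hV]; abel
    rw [key]
    exact sub_mem (hGauss U hU V hV).2.1 (hGauss V hV U hU).2.1
  have hmaster : ∀ X ∈ D, ∀ Y ∈ D, ∀ W ∈ TpN,
      g (h X (F Y) - h Y (F X)) W = g (F ⁅X, Y⁆) W := by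
    intro X hX Y hY W hW
    have hXTN := hDTN hX
    have hYTN := hDTN hY
    have hFY : F Y ∈ TN := hDTN (hFD Y hY)
    have hFX : F X ∈ TN := hDTN (hFD X hX)
    have e1 := (hGauss X hXTN (F Y) hFY).1
    have e2 := (hGauss Y hYTN (F X) hFX).1
    have key : h X (F Y) - h Y (F X)
        = F ⁅X, Y⁆ - (indN X (F Y) - indN Y (F X)) := by
      have hbr : F ⁅X, Y⁆ = F (nabla X Y) - F (nabla Y X) := by
        rw [← htorsionfree, map_sub]
      rw [hbr, ← hparallel X Y, ← hparallel Y X, e1, e2]; abel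
    have z1 : g (indN X (F Y)) W = 0 := horth1 _ (hGauss X hXTN (F Y) hFY).2.1 W hW
    have z2 : g (indN Y (F X)) W = 0 := horth1 _ (hGauss Y hYTN (F X) hFX).2.1 W hW
    rw [key, gsub, gsub, z1, z2]; ring
  constructor
  · -- involutive → condition
    intro hinv X hX Y hY Z hZ
    rw [hmaster X hX Y hY (F Z) (hFDp Z hZ)]
    exact horth1 _ (hDTN (hFD _ (hinv X hX Y hY))) _ (hFDp Z hZ)
  · -- condition → involutive
    intro hcond X hX Y hY
    have hXTN := hDTN hX
    have hYTN := hDTN hY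
    have hFXD := hFD X hX
    have hFYD := hFD Y hY
    have hmem : ∀ U ∈ TN, ∃ d ∈ D, ∃ z ∈ Dp, d + z = U := by
      intro U hU
      have hU' : U ∈ D ⊔ Dp := by rw [hDsum]; exact hU
      exact Submodule.mem_sup.mp hU'
    obtain ⟨a, ha, b, hb, hab⟩ := hmem _ (hbrTN X hXTN Y hYTN)
    obtain ⟨a1, ha1, b1, hb1, hab1⟩ := hmem _ (hbrTN (F X) (hDTN hFXD) Y hYTN)
    obtain ⟨a2, ha2, b2, hb2, hab2⟩ := hmem _ (hbrTN X hXTN (F Y) (hDTN hFYD))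
    obtain ⟨a3, ha3, b3, hb3, hab3⟩ := hmem _ (hbrTN (F X) (hDTN hFXD) (F Y) (hDTN hFYD))
    -- the condition says `g (F b) (F Z) = 0` for `Z ∈ Dp`
    have hFbZ : ∀ Z ∈ Dp, g (F b) (F Z) = 0 := by
      intro Z hZ
      have h0 := hcond X hX Y hY Z hZ
      rw [hmaster X hX Y hY (F Z) (hFDp Z hZ)] at h0
      have hsplitg : g (F ⁅X, Y⁆) (F Z) = g (F a) (F Z) + g (F b) (F Z) := by
        rw [← hab, map_add, gadd]
      rw [hsplitg] at h0
      have hz0 : g (F a) (F Z) = 0 := horth1 _ (hDTN (hFD a ha)) _ (hFDp Z hZ)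
      rw [hz0] at h0; linarith
    have hskew' : ∀ A B : Γ, g A (F B) = 0 → g (F A) B = 0 := by
      intro A B h0
      have hs := hskew A B
      rw [h0] at hs; simpa using hs
    have hFFbD : ∀ x ∈ D, g (F (F b)) x = 0 := by
      intro x hx
      exact hskew' _ _ (horth2 _ (hFDp b hb) _ (hDTN (hFD x hx)))
    have hFFbDp : ∀ z ∈ Dp, g (F (F b)) z = 0 := by
      intro z hz
      exact hskew' _ _ (hFbZ z hz)
    -- Nijenhuis identity from torsion-freeness and parallelism
    have hN : ⁅F X, F Y⁆ = F ⁅F X, Y⁆ + F ⁅X, F Y⁆ - F (F ⁅X, Y⁆) := by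
      simp only [← htorsionfree, map_sub, hparallel]
      abel
    rw [← hab, ← hab1, ← hab2, ← hab3] at hN
    simp only [map_add] at hN
    -- hN : a3 + b3 = (F a1 + F b1) + (F a2 + F b2) - (F (F a) + F (F b))
    set dd := F a1 + F a2 - F (F a) - a3 with hdd_def
    have hddD : dd ∈ D :=
      sub_mem (sub_mem (add_mem (hFD a1 ha1) (hFD a2 ha2)) (hFD (F a) (hFD a ha))) ha3
    have hEq : F (F b) = F a1 + F a2 - F (F a) - a3 - b3 + F b1 + F b2 := by
      have h0 : a3 + b3 - ((F a1 + F b1) + (F a2 + F b2) - (F (F a) + F (F b))) = 0 :=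
        sub_eq_zero.mpr hN
      have h1 : F (F b) - (F a1 + F a2 - F (F a) - a3 - b3 + F b1 + F b2)
          = a3 + b3 - ((F a1 + F b1) + (F a2 + F b2) - (F (F a) + F (F b))) := by abel
      rw [h0] at h1
      exact sub_eq_zero.mp h1
    have hEq' : F (F b) = dd - b3 + F b1 + F b2 := by rw [hdd_def, hEq]
    have gexp : ∀ x : Γ, g (F (F b)) x
        = g dd x - g b3 x + g (F b1) x + g (F b2) x := by
      intro x
      rw [hEq']
      simp only [map_sub, map_add, LinearMap.sub_apply, LinearMap.add_apply]
    have hdd0 : dd = 0 := by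
      apply hperp
      · intro x hx
        have e := gexp x
        rw [hFFbD x hx] at e
        have z3 : g b3 x = 0 := horthD2 b3 hb3 x hx
        have z4 : g (F b1) x = 0 := horth2 _ (hFDp b1 hb1) _ (hDTN hx)
        have z5 : g (F b2) x = 0 := horth2 _ (hFDp b2 hb2) _ (hDTN hx)
        rw [z3, z4, z5] at e
        linarith
      · intro x hx; exact horthD _ hddD _ hx
      · intro x hx; exact horth1 _ (hDTN hddD) _ hx
    have hb30 : b3 = 0 := by
      apply hperp
      · intro x hx; exact horthD2 _ hb3 _ hx
      · intro x hx
        have e := gexp x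
        rw [hFFbDp x hx] at e
        have z4 : g (F b1) x = 0 := horth2 _ (hFDp b1 hb1) _ (hDpTN hx)
        have z5 : g (F b2) x = 0 := horth2 _ (hFDp b2 hb2) _ (hDpTN hx)
        have z6 : g dd x = 0 := by rw [hdd0]; simp
        rw [z4, z5, z6] at e
        linarith
      · intro x hx; exact horth1 _ (hDpTN hb3) _ hx
    have hFb : F b = b1 + b2 := by
      apply hFinj
      rw [map_add, hEq', hdd0, hb30]
      abel
    have hFb0 : F b = 0 := by
      apply hperp
      · intro x hx; exact horth2 _ (hFDp b hb) _ (hDTN hx)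
      · intro x hx; exact horth2 _ (hFDp b hb) _ (hDpTN hx)
      · intro x hx
        rw [hFb]
        exact horth1 _ (hDpTN (add_mem hb1 hb2)) _ hx
    have hb0 : b = 0 := by
      apply hFinj
      rw [hFb0, map_zero]
    rw [← hab, hb0, add_zero]
    exact ha
end

section
/- Let N be a manifold with TN = D ⊕ D⊥, F a (1,1)-tensor on an ambient space restricting so that φ = F∘P and ω = F∘Q with P, Q the projections onto D, D⊥, and F(D) ⊆ D. Then for X, Y ∈ Γ(D), N_F(X,Y) = N_φ(X,Y) + Fω([X,Y]) - ω([φX, Y]) - ω([X, φY]), where N_F and N_φ denote the Nijenhuis tensors of F and φ. -/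
/-- Relation (3.6): for sections `X, Y` of `D`,
`N_F(X,Y) = N_φ(X,Y) + Fω([X,Y]) - ω([φX,Y]) - ω([X,φY])`. -/
theorem Nijenhuis_F_eq_Nijenhuis_phi_plus_omega_terms
    {Γ : Type*} [LieRing Γ] [Module ℝ Γ]
    (D Dp : Submodule ℝ Γ)
    (hsum : D ⊔ Dp = ⊤) (hindep : D ⊓ Dp = ⊥)
    (F P Q : Γ →ₗ[ℝ] Γ)
    (hP : ∀ x, P x ∈ D) (hPid : ∀ x ∈ D, P x = x) (hPzero : ∀ x ∈ Dp, P x = 0)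
    (hQ : ∀ x, Q x ∈ Dp) (hQid : ∀ x ∈ Dp, Q x = x) (hQzero : ∀ x ∈ D, Q x = 0)
    (hPQ : ∀ x, P x + Q x = x)
    (hFD : ∀ x ∈ D, F x ∈ D)
    (φ ω : Γ →ₗ[ℝ] Γ) (hφ : φ = F ∘ₗ P) (hω : ω = F ∘ₗ Q)
    (NF Nφ : Γ → Γ → Γ)
    (hNF : ∀ X Y, NF X Y = ⁅F X, F Y⁆ + F (F ⁅X, Y⁆) - F ⁅F X, Y⁆ - F ⁅X, F Y⁆)
    (hNφ : ∀ X Y, Nφ X Y = ⁅φ X, φ Y⁆ + φ (φ ⁅X, Y⁆) - φ ⁅φ X, Y⁆ - φ ⁅X, φ Y⁆) :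
    ∀ X ∈ D, ∀ Y ∈ D,
      NF X Y = Nφ X Y + F (ω ⁅X, Y⁆) - ω ⁅φ X, Y⁆ - ω ⁅X, φ Y⁆ := by
  intro X hX Y hY
  have hφmem : ∀ z, φ z ∈ D := fun z => by rw [hφ]; exact hFD _ (hP z)
  have hφX : φ X = F X := by rw [hφ]; simp [hPid X hX]
  have hφY : φ Y = F Y := by rw [hφ]; simp [hPid Y hY]
  have hdec : ∀ z, F z = φ z + ω z := fun z => by
    rw [hφ, hω]; simp only [LinearMap.comp_apply]; rw [← map_add, hPQ]
  have hφφ : ∀ z, φ (φ z) = F (φ z) := fun z => by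
    nth_rewrite 1 [hφ]
    simp only [LinearMap.comp_apply, hPid _ (hφmem z)]
  have key : F (F ⁅X, Y⁆) = φ (φ ⁅X, Y⁆) + F (ω ⁅X, Y⁆) := by
    conv_lhs => rw [hdec ⁅X, Y⁆]
    rw [map_add, hφφ]
  rw [hNF, hNφ, hφX, hφY, key, hdec ⁅F X, Y⁆, hdec ⁅X, F Y⁆]
  abel
end
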